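/- Let P ⊂ ℝ^d be a d-dimensional lattice polytope whose unique interior lattice point is the origin 0, and let T be a regular, unimodular, star triangulation of P centered at 0. Let R = ℂ[x_p : p ∈ ∂P ∩ ℤ^d]/(I_Σ + J_Σ), where I_Σ is the ideal generated by all monomials x_{p_1}⋯x_{p_r} with p_1,…,p_r ∈ ∂P ∩ ℤ^d and conv{p_1,…,p_r} ∉ T, and J_Σ is the ideal generated by the linear forms ∑_{p ∈ ∂P ∩ ℤ^d} φ(p)·x_p over all linear functions φ : ℤ^d → ℤ. Then the ℂ-algebra homomorphism ψ : ℂ[x_p : p ∈ P ∩ ℤ^d] → ℂ[x_p : p ∈ ∂P ∩ ℤ^d] defined by ψ(x_0) = −∑_{p ∈ (P ∩ ℤ^d)∖{0}} x_p and ψ(x_p) = x_p for p ∈ ∂P ∩ ℤ^d satisfies ψ(I) = I_Σ and ψ(J) = J_Σ, and induces a graded ℂ-algebra isomorphism A*(T) ≅ R. -/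

import Mathlib

open scoped BigOperators Pointwise
open MvPolynomial

noncomputable section

namespace EhrhartChow

/-- A point of `ℝ^N` with integer coordinates. -/
def IsLatticePoint {N : ℕ} (x : Fin N → ℝ) : Prop := ∀ i, ∃ z : ℤ, x i = (z : ℝ)

/-- A lattice polytope: the convex hull of finitely many lattice points. -/
def IsLatticePolytope {N : ℕ} (P : Set (Fin N → ℝ)) : Prop :=
  ∃ S : Finset (Fin N → ℝ), (∀ p ∈ S, IsLatticePoint p) ∧
    P = convexHull ℝ (S : Set (Fin N → ℝ))

/-- Dimension of a subset of `ℝ^N`. -/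
def setDim {N : ℕ} (s : Set (Fin N → ℝ)) : ℕ := Module.finrank ℝ ↥(vectorSpan ℝ s)

/-- The lattice points belonging to a set `P`. -/
def latticePoints {N : ℕ} (P : Set (Fin N → ℝ)) : Set (Fin N → ℝ) :=
  {x | x ∈ P ∧ IsLatticePoint x}

/-- A triangulation of a polytope `P ⊆ ℝ^N`, encoded by the vertex sets of its simplices. -/
structure Triangulation (N : ℕ) (P : Set (Fin N → ℝ)) where
  faces : Set (Finset (Fin N → ℝ))
  lattice_vertices : ∀ V ∈ faces, ∀ p ∈ V, IsLatticePoint p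
  indep : ∀ V ∈ faces, AffineIndependent ℝ (fun x : (V : Set (Fin N → ℝ)) => (x.1 : Fin N → ℝ))
  union_eq : (⋃ V ∈ faces, convexHull ℝ (V : Set (Fin N → ℝ))) = P
  down_closed : ∀ V ∈ faces, ∀ W : Finset (Fin N → ℝ), W ⊆ V → W ∈ faces
  inter_face : ∀ V ∈ faces, ∀ W ∈ faces,
    convexHull ℝ (V : Set (Fin N → ℝ)) ∩ convexHull ℝ (W : Set (Fin N → ℝ)) =
      convexHull ℝ ((V : Set (Fin N → ℝ)) ∩ (W : Set (Fin N → ℝ)))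

namespace Triangulation

variable {N : ℕ} {P : Set (Fin N → ℝ)}

/-- Unimodularity: the vertex set of every simplex can be completed to an affine
basis of `ℤ^N`. -/
def IsUnimodular (T : Triangulation N P) : Prop :=
  ∀ V ∈ T.faces, ∃ b : Fin (N + 1) → (Fin N → ℝ),
    (∀ i, IsLatticePoint (b i)) ∧ (V : Set (Fin N → ℝ)) ⊆ Set.range b ∧
    ∃ M : Matrix (Fin N) (Fin N) ℤ, IsUnit M.det ∧
      ∀ i j, b i.succ j - b 0 j = (M i j : ℝ)

/-- A maximal simplex of a triangulation. -/
def IsMaximalFace (T : Triangulation N P) (V : Finset (Fin N → ℝ)) : Prop :=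
  V ∈ T.faces ∧ ∀ W ∈ T.faces, V ⊆ W → W = V

/-- A weight function witnessing regularity: a `T`-piecewise-affine convex function whose
restrictions to distinct maximal simplices are distinct affine functions. -/
def IsWeightFunction (T : Triangulation N P) (φ : (Fin N → ℝ) → ℝ) : Prop :=
  ConvexOn ℝ P φ ∧
  ∃ g : Finset (Fin N → ℝ) → ((Fin N → ℝ) →ᵃ[ℝ] ℝ),
    (∀ V ∈ T.faces, ∀ x ∈ convexHull ℝ (V : Set (Fin N → ℝ)), φ x = g V x) ∧
    ∀ V W : Finset (Fin N → ℝ), T.IsMaximalFace V → T.IsMaximalFace W → V ≠ W → g V ≠ g W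

/-- A triangulation is regular if it admits a weight function. -/
def IsRegular (T : Triangulation N P) : Prop := ∃ φ, T.IsWeightFunction φ

/-- The closed star of a point in a triangulation. -/
def clstar (T : Triangulation N P) (p : Fin N → ℝ) : Set (Fin N → ℝ) :=
  ⋃ V ∈ {V ∈ T.faces | p ∈ convexHull ℝ (V : Set (Fin N → ℝ))},
    convexHull ℝ (V : Set (Fin N → ℝ))

/-- The ibip ("induced by interior points") condition for a triangulation of a
`d`-dimensional polytope. -/
def IsIbip (T : Triangulation N P) (d : ℕ) : Prop :=
  (∀ p ∈ intrinsicFrontier ℝ P, IsLatticePoint p →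
    ∃ q ∈ intrinsicInterior ℝ P, IsLatticePoint q ∧
      ∃ V ∈ T.faces, (V : Set (Fin N → ℝ)) = {p, q}) ∧
  (∀ (r : ℕ) (ps : Fin (r + 1) → (Fin N → ℝ)),
    (∀ i, ps i ∈ intrinsicInterior ℝ P ∧ IsLatticePoint (ps i)) →
    setDim (⋂ i, T.clstar (ps i)) = d) ∧
  (∀ p ∈ intrinsicInterior ℝ P, IsLatticePoint p →
    ∃ S : Finset (Fin N → ℝ), T.clstar p = convexHull ℝ (S : Set (Fin N → ℝ)))

end Triangulation

/-- Number of lattice points of the `k`-th dilate of `P`. -/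
def ehrhartCount {N : ℕ} (P : Set (Fin N → ℝ)) (k : ℕ) : ℕ :=
  Nat.card ↥(latticePoints ((k : ℝ) • P))

/-- `δ` is the δ-vector of a `d`-dimensional polytope `P`:
`∑_k |kP ∩ ℤ^N| t^k = (δ_0 + δ_1 t + ⋯ + δ_d t^d)/(1-t)^{d+1}`, encoded by clearing the
denominator (note that `1 - t` is invertible in `ℤ⟦t⟧`). -/
def IsDeltaVector {N : ℕ} (P : Set (Fin N → ℝ)) (d : ℕ) (δ : ℕ → ℤ) : Prop :=
  (∀ i, d < i → δ i = 0) ∧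
  (PowerSeries.mk fun k => (ehrhartCount P k : ℤ)) * (1 - PowerSeries.X) ^ (d + 1) =
    PowerSeries.mk fun i => δ i

/-- The ideal `I` of nonfaces: generated by the monomials `x_{p_1} ⋯ x_{p_r}` such that
`conv{p_1, …, p_r}` is not a simplex of the complex with face set `F`. -/
def nonfaceIdeal {N : ℕ} (P : Set (Fin N → ℝ)) (F : Set (Finset (Fin N → ℝ))) :
    Ideal (MvPolynomial (latticePoints P) ℂ) :=
  Ideal.span {m | ∃ S : Finset (latticePoints P),
    (¬ ∃ V ∈ F, (V : Set (Fin N → ℝ)) = Subtype.val '' (S : Set (latticePoints P))) ∧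
    m = ∏ p ∈ S, X p}

/-- The linear form `∑_{p ∈ P ∩ ℤ^N} φ(p)·x_p` attached to the affine function
`φ(x) = c + ∑ a_i x_i` on `ℤ^N`. -/
def affineFormPoly {N : ℕ} (P : Set (Fin N → ℝ)) (c : ℤ) (a : Fin N → ℤ) :
    MvPolynomial (latticePoints P) ℂ :=
  ∑ᶠ p : latticePoints P, (((c : ℂ) + ∑ i, (a i : ℂ) * ((p : Fin N → ℝ) i : ℂ))) • X p

/-- The ideal `J` generated by the linear forms attached to all affine functions
`ℤ^N → ℤ`. -/
def linearIdeal {N : ℕ} (P : Set (Fin N → ℝ)) : Ideal (MvPolynomial (latticePoints P) ℂ) :=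
  Ideal.span (Set.range fun ca : ℤ × (Fin N → ℤ) => affineFormPoly P ca.1 ca.2)

/-- The Stanley–Reisner ring of the simplicial complex with face set `F`. -/
abbrev SRRing {N : ℕ} (P : Set (Fin N → ℝ)) (F : Set (Finset (Fin N → ℝ))) :=
  MvPolynomial (latticePoints P) ℂ ⧸ nonfaceIdeal P F

/-- The Chow ring `A^*` of the simplicial complex with face set `F`. -/
abbrev ChowRing {N : ℕ} (P : Set (Fin N → ℝ)) (F : Set (Finset (Fin N → ℝ))) :=
  MvPolynomial (latticePoints P) ℂ ⧸ (nonfaceIdeal P F + linearIdeal P)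

/-- The degree-`i` graded component `A^i` of the Chow ring. -/
def chowComponent {N : ℕ} (P : Set (Fin N → ℝ)) (F : Set (Finset (Fin N → ℝ))) (i : ℕ) :
    Submodule ℂ (ChowRing P F) :=
  Submodule.map (Ideal.Quotient.mkₐ ℂ (nonfaceIdeal P F + linearIdeal P)).toLinearMap
    (homogeneousSubmodule (latticePoints P) ℂ i)

lemma nonfaceIdeal_mono {N : ℕ} (P : Set (Fin N → ℝ)) {F F' : Set (Finset (Fin N → ℝ))}
    (h : F' ⊆ F) : nonfaceIdeal P F ≤ nonfaceIdeal P F' := by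
  apply Ideal.span_mono
  rintro m ⟨S, hS, rfl⟩
  exact ⟨S, fun ⟨V, hV, he⟩ => hS ⟨V, h hV, he⟩, rfl⟩

/-- The restriction map between Stanley–Reisner rings of a complex and a subcomplex,
sending `x_p` to `x_p` when `p` belongs to the subcomplex and to `0` otherwise. -/
def srRestrict {N : ℕ} (P : Set (Fin N → ℝ)) {F F' : Set (Finset (Fin N → ℝ))}
    (h : F' ⊆ F) : SRRing P F →+* SRRing P F' :=
  Ideal.Quotient.factor (nonfaceIdeal_mono P h)

/-- The restriction map between Chow rings of a complex and a subcomplex. -/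
def chowRestrict {N : ℕ} (P : Set (Fin N → ℝ)) {F F' : Set (Finset (Fin N → ℝ))}
    (h : F' ⊆ F) : ChowRing P F →+* ChowRing P F' :=
  Ideal.Quotient.factor (sup_le_sup_right (nonfaceIdeal_mono P h) _)

/-- The faces of `T` contained in the region `Q`; this is the induced triangulation
`T|_Q` of a subpolytope `Q` which is a union of simplices of `T`. -/
def Triangulation.restrictFaces {N : ℕ} {P : Set (Fin N → ℝ)} (T : Triangulation N P)
    (Q : Set (Fin N → ℝ)) : Set (Finset (Fin N → ℝ)) :=
  {V ∈ T.faces | convexHull ℝ (V : Set (Fin N → ℝ)) ⊆ Q}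

lemma Triangulation.restrictFaces_subset {N : ℕ} {P : Set (Fin N → ℝ)}
    (T : Triangulation N P) (Q : Set (Fin N → ℝ)) : T.restrictFaces Q ⊆ T.faces :=
  fun _ hV => hV.1

lemma Triangulation.restrictFaces_mono {N : ℕ} {P : Set (Fin N → ℝ)} (T : Triangulation N P)
    {Q Q' : Set (Fin N → ℝ)} (h : Q ⊆ Q') : T.restrictFaces Q ⊆ T.restrictFaces Q' :=
  fun _ hV => ⟨hV.1, hV.2.trans h⟩

/-- The interior lattice points of `P`. -/
abbrev IntPts {N : ℕ} (P : Set (Fin N → ℝ)) : Type :=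
  {x : Fin N → ℝ // x ∈ intrinsicInterior ℝ P ∧ IsLatticePoint x}

end EhrhartChow

namespace EhrhartChow

/-- The lattice points on the relative boundary of `P`. -/
def bdryLatticePoints {N : ℕ} (P : Set (Fin N → ℝ)) : Set (Fin N → ℝ) :=
  {x | x ∈ intrinsicFrontier ℝ P ∧ IsLatticePoint x}

/-- The Stanley–Reisner ideal `I_Σ` on the boundary variables. -/
def bdryNonfaceIdeal {N : ℕ} (P : Set (Fin N → ℝ)) (F : Set (Finset (Fin N → ℝ))) :
    Ideal (MvPolynomial (bdryLatticePoints P) ℂ) :=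
  Ideal.span {m | ∃ S : Finset (bdryLatticePoints P),
    (¬ ∃ V ∈ F, (V : Set (Fin N → ℝ)) = Subtype.val '' (S : Set (bdryLatticePoints P))) ∧
    m = ∏ p ∈ S, X p}

/-- The linear form `∑_{p ∈ ∂P ∩ ℤ^d} φ(p)·x_p` attached to the linear function
`φ(x) = ∑ a_i x_i`. -/
def bdryLinearForm {N : ℕ} (P : Set (Fin N → ℝ)) (a : Fin N → ℤ) :
    MvPolynomial (bdryLatticePoints P) ℂ :=
  ∑ᶠ p : bdryLatticePoints P, (∑ i, (a i : ℂ) * ((p : Fin N → ℝ) i : ℂ)) • X p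

/-- The ideal `J_Σ` generated by the linear forms attached to all linear functions
`ℤ^d → ℤ`. -/
def bdryLinearIdeal {N : ℕ} (P : Set (Fin N → ℝ)) :
    Ideal (MvPolynomial (bdryLatticePoints P) ℂ) :=
  Ideal.span (Set.range (bdryLinearForm P))

/-- The ring `R = ℂ[x_p : p ∈ ∂P ∩ ℤ^d]/(I_Σ + J_Σ)`. -/
abbrev BdryRing {N : ℕ} (P : Set (Fin N → ℝ)) (F : Set (Finset (Fin N → ℝ))) :=
  MvPolynomial (bdryLatticePoints P) ℂ ⧸ (bdryNonfaceIdeal P F + bdryLinearIdeal P)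

/-- The degree-`i` graded component of `BdryRing`. -/
def bdryComponent {N : ℕ} (P : Set (Fin N → ℝ)) (F : Set (Finset (Fin N → ℝ))) (i : ℕ) :
    Submodule ℂ (BdryRing P F) :=
  Submodule.map (Ideal.Quotient.mkₐ ℂ (bdryNonfaceIdeal P F + bdryLinearIdeal P)).toLinearMap
    (homogeneousSubmodule (bdryLatticePoints P) ℂ i)

/-- The value of `ψ` on the variable `x_p`: `ψ(x_0) = -∑_{q ∈ ∂P ∩ ℤ^d} x_q` and
`ψ(x_p) = x_p` for boundary points `p`. -/
def starVar {N : ℕ} (P : Set (Fin N → ℝ)) (p : latticePoints P) :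
    MvPolynomial (bdryLatticePoints P) ℂ :=
  open Classical in
  if (p : Fin N → ℝ) = 0 then -∑ᶠ q : bdryLatticePoints P, X q
  else if h : (p : Fin N → ℝ) ∈ intrinsicFrontier ℝ P then
    X (⟨(p : Fin N → ℝ), h, p.2.2⟩ : bdryLatticePoints P)
  else 0

/-- The homomorphism `ψ : ℂ[x_p : p ∈ P ∩ ℤ^d] → ℂ[x_p : p ∈ ∂P ∩ ℤ^d]`. -/
def starMap {N : ℕ} (P : Set (Fin N → ℝ)) :
    MvPolynomial (latticePoints P) ℂ →ₐ[ℂ] MvPolynomial (bdryLatticePoints P) ℂ :=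
  aeval (starVar P)

/-- `T` is a star triangulation of `P` centered at `o`: every simplex either lies in the
relative boundary or is the cone over a boundary simplex with apex `o`, and the cone over
every boundary simplex belongs to `T`. -/
def Triangulation.IsStarAt {N : ℕ} {P : Set (Fin N → ℝ)} (T : Triangulation N P)
    (o : Fin N → ℝ) : Prop :=
  (∀ V ∈ T.faces, convexHull ℝ (V : Set (Fin N → ℝ)) ⊆ intrinsicFrontier ℝ P ∨
    ∃ W ∈ T.faces, convexHull ℝ (W : Set (Fin N → ℝ)) ⊆ intrinsicFrontier ℝ P ∧
      (V : Set (Fin N → ℝ)) = insert o (W : Set (Fin N → ℝ))) ∧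
  (∀ W ∈ T.faces, convexHull ℝ (W : Set (Fin N → ℝ)) ⊆ intrinsicFrontier ℝ P →
    ∃ V ∈ T.faces, (V : Set (Fin N → ℝ)) = insert o (W : Set (Fin N → ℝ)))

/-!
Every lattice point of `P` other than the origin lies on `∂P`, so `ψ` is a retraction onto the
boundary variables and `f - ψ(f)` is always a multiple of `x_0 + ∑_{q ∈ ∂P} x_q`, the linear form
of the constant function `1`. Hence `ker ψ ⊆ J`, and `ψ` induces `A*(T) ≅ R` as soon as
`ψ(I) = I_Σ` and `ψ(J) = J_Σ`. For `J`: `ψ` sends the form of `c + φ` to that of `φ`, since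
`c ψ(x_0)` cancels `c ∑ x_q`. For `I`: `ψ(x_σ)` is divisible by the monomial of `σ ∖ {0}`, which is
a nonface whenever `σ` is, because the cone from `0` over a boundary face of a star triangulation
is again a face.
-/

def _root_.Ideal.quotientAlgEquivMapOfSurjective {R A B : Type*} [CommRing R] [CommRing A]
    [CommRing B] [Algebra R A] [Algebra R B] (f : A →ₐ[R] B) (hf : Function.Surjective f)
    (K : Ideal A) (hK : RingHom.ker f ≤ K) : (A ⧸ K) ≃ₐ[R] B ⧸ K.map f :=
  AlgEquiv.ofBijective (Ideal.quotientMapₐ _ f Ideal.le_comap_map) <|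
    show Function.Bijective _ from
    ⟨Ideal.quotientMap_injective' (H := Ideal.le_comap_map) <| by
        change Ideal.comap (f : A →+* B) (Ideal.map (f : A →+* B) K) ≤ K
        rw [Ideal.comap_map_of_surjective (f : A →+* B) hf, ← RingHom.ker_eq_comap_bot]
        exact sup_le le_rfl hK,
      Ideal.quotientMap_surjective (H := Ideal.le_comap_map) hf⟩

theorem _root_.MvPolynomial.sub_rename_mem_of_forall_X {R σ τ : Type*} [CommRing R]
    (ψ : MvPolynomial σ R →ₐ[R] MvPolynomial τ R) (ι : τ → σ) (I : Ideal (MvPolynomial σ R))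
    (h : ∀ p, X p - rename ι (ψ (X p)) ∈ I) (f : MvPolynomial σ R) :
    f - rename ι (ψ f) ∈ I := by
  rw [← Ideal.Quotient.eq]
  change Ideal.Quotient.mkₐ R I f = ((Ideal.Quotient.mkₐ R I).comp ((rename ι).comp ψ)) f
  refine DFunLike.congr_fun (algHom_ext fun p => ?_) f
  simpa [Ideal.Quotient.eq] using h p

section StarMap

variable {N : ℕ} {P : Set (Fin N → ℝ)}

theorem isLatticePoint_iff_mem_span (x : Fin N → ℝ) :
    IsLatticePoint x ↔ x ∈ Submodule.span ℤ (Set.range (Pi.basisFun ℝ (Fin N))) := by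
  simp [Module.Basis.mem_span_iff_repr_mem, IsLatticePoint, eq_comm]

theorem IsLatticePolytope.isClosed (hP : IsLatticePolytope P) : IsClosed P := by
  obtain ⟨S, -, rfl⟩ := hP
  exact S.finite_toSet.isClosed_convexHull ℝ

theorem IsLatticePolytope.finite_latticePoints (hP : IsLatticePolytope P) :
    (latticePoints P).Finite := by
  obtain ⟨S, -, rfl⟩ := hP
  refine (ZSpan.setFinite_inter (Pi.basisFun ℝ (Fin N))
    (S.finite_toSet.isCompact_convexHull ℝ).isBounded).subset ?_
  rintro x ⟨hx, hlat⟩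
  exact ⟨hx, (isLatticePoint_iff_mem_span x).1 hlat⟩

theorem bdryLatticePoints_subset (hP : IsClosed P) : bdryLatticePoints P ⊆ latticePoints P :=
  fun _ hx => ⟨intrinsicFrontier_subset hP hx.1, hx.2⟩

theorem zero_mem_intrinsicInterior
    (h0 : {x | x ∈ intrinsicInterior ℝ P ∧ IsLatticePoint x} = {(0 : Fin N → ℝ)}) :
    (0 : Fin N → ℝ) ∈ intrinsicInterior ℝ P :=
  ((Set.ext_iff.1 h0 0).2 rfl).1

theorem zero_mem_latticePoints
    (h0 : {x | x ∈ intrinsicInterior ℝ P ∧ IsLatticePoint x} = {(0 : Fin N → ℝ)}) :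
    (0 : Fin N → ℝ) ∈ latticePoints P :=
  ⟨intrinsicInterior_subset (zero_mem_intrinsicInterior h0), fun _ => ⟨0, by simp⟩⟩

theorem zero_notMem_intrinsicFrontier
    (h0 : {x | x ∈ intrinsicInterior ℝ P ∧ IsLatticePoint x} = {(0 : Fin N → ℝ)}) :
    (0 : Fin N → ℝ) ∉ intrinsicFrontier ℝ P := by
  have h := zero_mem_intrinsicInterior h0
  rw [← intrinsicClosure_sdiff_intrinsicFrontier] at h
  exact h.2

theorem mem_intrinsicFrontier_of_ne_zero
    (h0 : {x | x ∈ intrinsicInterior ℝ P ∧ IsLatticePoint x} = {(0 : Fin N → ℝ)})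
    {p : Fin N → ℝ} (hp : p ∈ latticePoints P) (hp0 : p ≠ 0) : p ∈ intrinsicFrontier ℝ P := by
  rw [← intrinsicClosure_sdiff_intrinsicInterior]
  exact ⟨subset_intrinsicClosure hp.1, fun hpi => hp0 ((Set.ext_iff.1 h0 p).1 ⟨hpi, hp.2⟩)⟩

abbrev bdryIncl (hP : IsClosed P) : bdryLatticePoints P → latticePoints P :=
  Set.inclusion (bdryLatticePoints_subset hP)

theorem bdryIncl_injective (hP : IsClosed P) : Function.Injective (bdryIncl hP) :=
  Set.inclusion_injective _

theorem range_bdryIncl (hP : IsClosed P)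
    (h0 : {x | x ∈ intrinsicInterior ℝ P ∧ IsLatticePoint x} = {(0 : Fin N → ℝ)}) :
    Set.range (bdryIncl hP) = {p : latticePoints P | (p : Fin N → ℝ) ≠ 0} := by
  ext p
  rw [Set.range_inclusion]
  exact ⟨fun hp h => zero_notMem_intrinsicFrontier h0 (h ▸ hp.1),
    fun hp => ⟨mem_intrinsicFrontier_of_ne_zero h0 p.2 hp, p.2.2⟩⟩

theorem sum_latticePoints_eq_add_sum_bdryLatticePoints {M : Type*} [AddCommMonoid M]
    (hP : IsClosed P)
    (h0 : {x | x ∈ intrinsicInterior ℝ P ∧ IsLatticePoint x} = {(0 : Fin N → ℝ)})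
    [Fintype (latticePoints P)] [Fintype (bdryLatticePoints P)] (f : latticePoints P → M) :
    ∑ p, f p = f ⟨0, zero_mem_latticePoints h0⟩ + ∑ q, f (bdryIncl hP q) := by
  classical
  have hcompl : ({⟨0, zero_mem_latticePoints h0⟩}ᶜ : Finset (latticePoints P)) =
      Finset.univ.map ⟨bdryIncl hP, bdryIncl_injective hP⟩ := by
    ext p
    have := congrArg (p ∈ ·) (range_bdryIncl hP h0)
    simp_all [Subtype.ext_iff]
  rw [Fintype.sum_eq_add_sum_compl _ f, hcompl, Finset.sum_map]
  rfl

theorem starVar_zero (h : (0 : Fin N → ℝ) ∈ latticePoints P) :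
    starVar P ⟨0, h⟩ = -∑ᶠ q : bdryLatticePoints P, X q :=
  if_pos rfl

theorem starVar_bdryIncl (hP : IsClosed P) (h0 : (0 : Fin N → ℝ) ∉ intrinsicFrontier ℝ P)
    (q : bdryLatticePoints P) : starVar P (bdryIncl hP q) = X q := by
  rw [starVar, if_neg (ne_of_mem_of_not_mem q.2.1 h0), dif_pos q.2.1]

theorem starMap_X_bdryIncl (hP : IsClosed P) (h0 : (0 : Fin N → ℝ) ∉ intrinsicFrontier ℝ P)
    (q : bdryLatticePoints P) : starMap P (X (bdryIncl hP q)) = X q := by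
  rw [starMap, aeval_X, starVar_bdryIncl hP h0]

theorem starMap_surjective (hP : IsClosed P) (h0 : (0 : Fin N → ℝ) ∉ intrinsicFrontier ℝ P) :
    Function.Surjective (starMap P) := by
  have hsection : (starMap P).comp (rename (bdryIncl hP)) = AlgHom.id ℂ _ :=
    algHom_ext fun q => by simp [starMap_X_bdryIncl hP h0]
  exact fun g => ⟨rename (bdryIncl hP) g, DFunLike.congr_fun hsection g⟩

theorem isHomogeneous_starVar (p : latticePoints P) : (starVar P p).IsHomogeneous 1 := by
  rw [starVar]
  split_ifs
  · exact IsHomogeneous.neg <| finsum_induction (IsHomogeneous · 1) (isHomogeneous_zero _ _ _)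
      (fun _ _ => IsHomogeneous.add) (isHomogeneous_X _)
  · exact isHomogeneous_X _ _
  · exact isHomogeneous_zero _ _ _

theorem isHomogeneous_starMap {φ : MvPolynomial (latticePoints P) ℂ} {n : ℕ}
    (hφ : φ.IsHomogeneous n) : (starMap P φ).IsHomogeneous n := by
  have h := hφ.aeval (starVar P) isHomogeneous_starVar
  rwa [one_mul] at h

theorem starMap_affineFormPoly (hP : IsLatticePolytope P)
    (h0 : {x | x ∈ intrinsicInterior ℝ P ∧ IsLatticePoint x} = {(0 : Fin N → ℝ)})
    (c : ℤ) (a : Fin N → ℤ) : starMap P (affineFormPoly P c a) = bdryLinearForm P a := by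
  have hfin := hP.finite_latticePoints
  have := hfin.fintype
  have := (hfin.subset (bdryLatticePoints_subset hP.isClosed)).fintype
  rw [affineFormPoly, bdryLinearForm, finsum_eq_sum_of_fintype, finsum_eq_sum_of_fintype,
    map_sum, sum_latticePoints_eq_add_sum_bdryLatticePoints hP.isClosed h0]
  simp [starMap, starVar_zero, starVar_bdryIncl hP.isClosed (zero_notMem_intrinsicFrontier h0),
    add_smul, Finset.sum_add_distrib, finsum_eq_sum_of_fintype, Finset.smul_sum]

theorem map_starMap_linearIdeal (hP : IsLatticePolytope P)
    (h0 : {x | x ∈ intrinsicInterior ℝ P ∧ IsLatticePoint x} = {(0 : Fin N → ℝ)}) :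
    Ideal.map (starMap P) (linearIdeal P) = bdryLinearIdeal P := by
  rw [linearIdeal, bdryLinearIdeal, Ideal.map_span, ← Set.range_comp]
  have h : starMap P ∘ (fun ca : ℤ × (Fin N → ℤ) => affineFormPoly P ca.1 ca.2) =
      bdryLinearForm P ∘ Prod.snd :=
    funext fun ca => starMap_affineFormPoly hP h0 ca.1 ca.2
  rw [h, Prod.snd_surjective.range_comp]

theorem sub_rename_starMap_X_mem_linearIdeal (hP : IsLatticePolytope P)
    (h0 : {x | x ∈ intrinsicInterior ℝ P ∧ IsLatticePoint x} = {(0 : Fin N → ℝ)})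
    (p : latticePoints P) :
    X p - rename (bdryIncl hP.isClosed) (starMap P (X p)) ∈ linearIdeal P := by
  by_cases hp : (p : Fin N → ℝ) = 0
  · obtain rfl : p = ⟨0, zero_mem_latticePoints h0⟩ := Subtype.ext hp
    have hfin := hP.finite_latticePoints
    have := hfin.fintype
    have := (hfin.subset (bdryLatticePoints_subset hP.isClosed)).fintype
    have hsum : X ⟨0, zero_mem_latticePoints h0⟩ -
        rename (bdryIncl hP.isClosed) (starMap P (X ⟨0, zero_mem_latticePoints h0⟩)) =
          affineFormPoly P 1 0 := by
      rw [affineFormPoly, finsum_eq_sum_of_fintype,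
        sum_latticePoints_eq_add_sum_bdryLatticePoints hP.isClosed h0]
      simp [starMap, starVar_zero, finsum_eq_sum_of_fintype]
    rw [hsum]
    exact Ideal.subset_span ⟨(1, 0), rfl⟩
  · obtain ⟨q, rfl⟩ : p ∈ Set.range (bdryIncl hP.isClosed) := by
      rw [range_bdryIncl hP.isClosed h0]
      exact hp
    rw [starMap_X_bdryIncl _ (zero_notMem_intrinsicFrontier h0), rename_X, sub_self]
    exact zero_mem _

theorem ker_starMap_le_linearIdeal (hP : IsLatticePolytope P)
    (h0 : {x | x ∈ intrinsicInterior ℝ P ∧ IsLatticePoint x} = {(0 : Fin N → ℝ)}) :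
    RingHom.ker (starMap P) ≤ linearIdeal P := fun f hf => by
  simpa [RingHom.mem_ker.1 hf] using
    sub_rename_mem_of_forall_X _ _ _ (sub_rename_starMap_X_mem_linearIdeal hP h0) f

theorem Triangulation.IsStarAt.exists_insert_mem_faces {T : Triangulation N P}
    {o : Fin N → ℝ} (hstar : T.IsStarAt o) {V : Finset (Fin N → ℝ)} (hV : V ∈ T.faces)
    (ho : o ∉ V) : ∃ W ∈ T.faces, (W : Set (Fin N → ℝ)) = insert o (V : Set (Fin N → ℝ)) := by
  refine hstar.2 V hV ((hstar.1 V hV).resolve_right ?_)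
  rintro ⟨W, -, -, hVW⟩
  exact ho (Finset.mem_coe.1 (hVW ▸ Set.mem_insert o _))

theorem Triangulation.IsStarAt.exists_mem_faces_of_eq_sdiff {T : Triangulation N P}
    {o : Fin N → ℝ} (hstar : T.IsStarAt o) {V : Finset (Fin N → ℝ)} (hV : V ∈ T.faces)
    {s : Set (Fin N → ℝ)} (hVs : (V : Set (Fin N → ℝ)) = s \ {o}) :
    ∃ W ∈ T.faces, (W : Set (Fin N → ℝ)) = s := by
  have ho : o ∉ V := fun ho => by
    have : o ∈ s \ {o} := hVs ▸ Finset.mem_coe.2 ho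
    exact this.2 rfl
  obtain ⟨W, hW, hWV⟩ := hstar.exists_insert_mem_faces hV ho
  by_cases hos : o ∈ s
  · exact ⟨W, hW, by rw [hWV, hVs, Set.insert_sdiff_singleton, Set.insert_eq_of_mem hos]⟩
  · exact ⟨V, hV, by rw [hVs, Set.sdiff_singleton_eq_self hos]⟩

theorem image_val_preimage_bdryIncl (hP : IsClosed P)
    (h0 : {x | x ∈ intrinsicInterior ℝ P ∧ IsLatticePoint x} = {(0 : Fin N → ℝ)})
    (S : Finset (latticePoints P)) :
    Subtype.val '' ((S.preimage (bdryIncl hP) (bdryIncl_injective hP).injOn :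
      Finset (bdryLatticePoints P)) : Set (bdryLatticePoints P)) =
      Subtype.val '' (S : Set (latticePoints P)) \ {0} := by
  ext x
  simp only [Finset.coe_preimage, Set.mem_image, Set.mem_preimage, Finset.mem_coe, Set.mem_sdiff,
    Set.mem_singleton_iff]
  constructor
  · rintro ⟨q, hq, rfl⟩
    exact ⟨⟨_, hq, rfl⟩, ne_of_mem_of_not_mem q.2.1 (zero_notMem_intrinsicFrontier h0)⟩
  · rintro ⟨⟨p, hp, rfl⟩, hp0⟩
    obtain ⟨q, rfl⟩ : p ∈ Set.range (bdryIncl hP) := by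
      rw [range_bdryIncl hP h0]
      exact hp0
    exact ⟨q, hp, rfl⟩

theorem prod_X_preimage_dvd_starMap_prod_X (hP : IsClosed P)
    (h0 : (0 : Fin N → ℝ) ∉ intrinsicFrontier ℝ P) (S : Finset (latticePoints P)) :
    ∏ q ∈ S.preimage (bdryIncl hP) (bdryIncl_injective hP).injOn, X q ∣
      starMap P (∏ p ∈ S, X p) := by
  classical
  rw [map_prod, ← Finset.prod_filter_mul_prod_filter_not S (· ∈ Set.range (bdryIncl hP)),
    ← Finset.prod_preimage']
  simp only [starMap_X_bdryIncl hP h0]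
  exact dvd_mul_right _ _

theorem map_starMap_nonfaceIdeal (hP : IsClosed P)
    (h0 : {x | x ∈ intrinsicInterior ℝ P ∧ IsLatticePoint x} = {(0 : Fin N → ℝ)})
    {T : Triangulation N P} (hstar : T.IsStarAt 0) :
    Ideal.map (starMap P) (nonfaceIdeal P T.faces) = bdryNonfaceIdeal P T.faces := by
  rw [nonfaceIdeal, bdryNonfaceIdeal, Ideal.map_span]
  apply le_antisymm <;> rw [Ideal.span_le]
  · rintro _ ⟨_, ⟨S, hS, rfl⟩, rfl⟩
    obtain ⟨g, hg⟩ := prod_X_preimage_dvd_starMap_prod_X hP (zero_notMem_intrinsicFrontier h0) S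
    rw [hg]
    refine Ideal.mul_mem_right _ _ (Ideal.subset_span ⟨_, fun ⟨V, hV, hVS⟩ => hS ?_, rfl⟩)
    exact hstar.exists_mem_faces_of_eq_sdiff hV (hVS.trans (image_val_preimage_bdryIncl hP h0 S))
  · rintro _ ⟨S, hS, rfl⟩
    refine Ideal.subset_span ⟨_, ⟨S.map ⟨bdryIncl hP, bdryIncl_injective hP⟩, ?_, rfl⟩, ?_⟩
    · simpa [Set.image_image] using hS
    · simp [Finset.prod_map, starMap_X_bdryIncl hP (zero_notMem_intrinsicFrontier h0)]

theorem mem_bdryComponent_of_mem_chowComponent {F : Set (Finset (Fin N → ℝ))}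
    (e : ChowRing P F ≃ₐ[ℂ] BdryRing P F)
    (he : ∀ f, e (Ideal.Quotient.mk _ f) = Ideal.Quotient.mk _ (starMap P f))
    {i : ℕ} {x : ChowRing P F} (hx : x ∈ chowComponent P F i) : e x ∈ bdryComponent P F i := by
  obtain ⟨f, hf, rfl⟩ := hx
  exact ⟨starMap P f, isHomogeneous_starMap hf, (he f).symm⟩

end StarMap

theorem chowRing_star_triangulation_general {d : ℕ} (P : Set (Fin d → ℝ))
    (hP : IsLatticePolytope P)
    (h0 : {x | x ∈ intrinsicInterior ℝ P ∧ IsLatticePoint x} = {(0 : Fin d → ℝ)})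
    (T : Triangulation d P)
    (hstar : T.IsStarAt 0) :
    Ideal.map (starMap P) (nonfaceIdeal P T.faces) = bdryNonfaceIdeal P T.faces ∧
    Ideal.map (starMap P) (linearIdeal P) = bdryLinearIdeal P ∧
    ∃ e : ChowRing P T.faces ≃ₐ[ℂ] BdryRing P T.faces,
      (∀ f : MvPolynomial (latticePoints P) ℂ,
        e (Ideal.Quotient.mk _ f) = Ideal.Quotient.mk _ (starMap P f)) ∧
      ∀ i : ℕ, ∀ x ∈ chowComponent P T.faces i, e x ∈ bdryComponent P T.faces i := by
  have hI := map_starMap_nonfaceIdeal hP.isClosed h0 hstar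
  have hJ := map_starMap_linearIdeal hP h0
  have hK : Ideal.map (starMap P) (nonfaceIdeal P T.faces + linearIdeal P) =
      bdryNonfaceIdeal P T.faces + bdryLinearIdeal P := by
    simp only [Submodule.add_eq_sup, Ideal.map_sup, hI, hJ]
  let e := (Ideal.quotientAlgEquivMapOfSurjective (starMap P)
    (starMap_surjective hP.isClosed (zero_notMem_intrinsicFrontier h0)) _
    ((ker_starMap_le_linearIdeal hP h0).trans le_sup_right)).trans
    (Ideal.quotientEquivAlgOfEq ℂ hK)
  have he : ∀ f, e (Ideal.Quotient.mk _ f) = Ideal.Quotient.mk _ (starMap P f) := fun _ => rfl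
  exact ⟨hI, hJ, e, he, fun _ _ => mem_bdryComponent_of_mem_chowComponent e he⟩

/-- **Proposition (Chow ring of a star triangulation of a reflexive-type polytope).**
If `P ⊆ ℝ^d` is a full-dimensional lattice `d`-polytope whose unique interior lattice
point is the origin and `T` is a regular, unimodular star triangulation of `P` centered
at `0`, then `ψ(I) = I_Σ`, `ψ(J) = J_Σ`, and `ψ` induces a graded isomorphism
`A^*(T) ≅ ℂ[x_p : p ∈ ∂P ∩ ℤ^d]/(I_Σ + J_Σ)`. -/
theorem chowRing_star_triangulation {d : ℕ} (P : Set (Fin d → ℝ))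
    (hP : IsLatticePolytope P) (hd : setDim P = d)
    (h0 : {x | x ∈ intrinsicInterior ℝ P ∧ IsLatticePoint x} = {(0 : Fin d → ℝ)})
    (T : Triangulation d P) (hreg : T.IsRegular) (huni : T.IsUnimodular)
    (hstar : T.IsStarAt 0) :
    Ideal.map (starMap P) (nonfaceIdeal P T.faces) = bdryNonfaceIdeal P T.faces ∧
    Ideal.map (starMap P) (linearIdeal P) = bdryLinearIdeal P ∧
    ∃ e : ChowRing P T.faces ≃ₐ[ℂ] BdryRing P T.faces,
      (∀ f : MvPolynomial (latticePoints P) ℂ,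
        e (Ideal.Quotient.mk _ f) = Ideal.Quotient.mk _ (starMap P f)) ∧
      ∀ i : ℕ, ∀ x ∈ chowComponent P T.faces i, e x ∈ bdryComponent P T.faces i :=
  chowRing_star_triangulation_general P hP h0 T hstar

end EhrhartChow
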